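/- arXiv:2205.06393 — 3 statements merged into one kernel-verified Lean document; each statement's English description precedes it below -/
import Mathlib

section
/- For α ∈ (0,1) ∪ (1,∞), the function γ_α : [0,1] → ℝ defined by γ_α(p) = (α/(α-1)) · (((1+p)^α + (1-p)^α)^{1/α} - 2^{1/α}) is strictly monotone increasing on [0,1]. -/
theorem gamma_strictMonoOn (α : ℝ) (hα : α ∈ Set.Ioo (0:ℝ) 1 ∪ Set.Ioi (1:ℝ)) :
    StrictMonoOn
      (fun p : ℝ => (α / (α - 1)) * (((1 + p) ^ α + (1 - p) ^ α) ^ (1/α) - (2:ℝ) ^ (1/α)))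
      (Set.Icc 0 1) := by
  have hα0 : 0 < α := by rcases hα with h | h; exact h.1; linarith [h.out]
  have hαne : α - 1 ≠ 0 := by
    rcases hα with h | h
    · have := h.2; intro hc; linarith
    · have := h.out; intro hc; linarith
  apply strictMonoOn_of_deriv_pos (convex_Icc 0 1)
  · apply Continuous.continuousOn
    apply continuous_const.mul
    apply Continuous.sub _ continuous_const
    apply Continuous.rpow_const
    · exact ((continuous_const.add continuous_id).rpow_const
        (fun x => Or.inr hα0.le)).add
        ((continuous_const.sub continuous_id).rpow_const (fun x => Or.inr hα0.le))
    · intro x; exact Or.inr (by positivity)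
  · intro x hx
    rw [interior_Icc, Set.mem_Ioo] at hx
    have h1p : (0:ℝ) < 1 + x := by linarith [hx.1]
    have h1m : (0:ℝ) < 1 - x := by linarith [hx.2]
    set g : ℝ → ℝ := fun p => (1 + p) ^ α + (1 - p) ^ α with hg
    have hgx : 0 < g x := by
      have := Real.rpow_pos_of_pos h1p α
      have := Real.rpow_pos_of_pos h1m α
      simp only [hg]; linarith
    have hd1 : HasDerivAt (fun p : ℝ => (1 + p) ^ α)
        (1 * α * (1 + x) ^ (α - 1)) x :=
      ((hasDerivAt_id x).const_add 1).rpow_const (Or.inl h1p.ne')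
    have hd2 : HasDerivAt (fun p : ℝ => (1 - p) ^ α)
        ((-1) * α * (1 - x) ^ (α - 1)) x :=
      ((hasDerivAt_id x).const_sub 1).rpow_const (Or.inl h1m.ne')
    have hdg : HasDerivAt g
        (1 * α * (1 + x) ^ (α - 1) + (-1) * α * (1 - x) ^ (α - 1)) x := hd1.add hd2
    have hdf : HasDerivAt
        (fun p : ℝ => (α / (α - 1)) * ((g p) ^ (1/α) - (2:ℝ) ^ (1/α)))
        ((α / (α - 1)) *
          ((1 * α * (1 + x) ^ (α - 1) + (-1) * α * (1 - x) ^ (α - 1)) * (1/α) *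
            (g x) ^ (1/α - 1))) x :=
      ((hdg.rpow_const (Or.inl hgx.ne')).sub_const _).const_mul _
    rw [hdf.deriv]
    have hgpow : 0 < (g x) ^ (1/α - 1) := Real.rpow_pos_of_pos hgx _
    have key : (α / (α - 1)) *
        ((1 * α * (1 + x) ^ (α - 1) + (-1) * α * (1 - x) ^ (α - 1)) * (1/α) *
          (g x) ^ (1/α - 1))
        = (α / (α - 1)) * ((1 + x) ^ (α - 1) - (1 - x) ^ (α - 1)) *
          (g x) ^ (1/α - 1) := by
      field_simp
      ring
    rw [key]
    have hlt : 1 - x < 1 + x := by linarith [hx.1]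
    rcases hα with h | h
    · -- α < 1 : coefficient negative, difference negative
      have hc : α / (α - 1) < 0 := div_neg_of_pos_of_neg hα0 (by linarith [h.2])
      have hAB : (1 + x) ^ (α - 1) < (1 - x) ^ (α - 1) :=
        Real.rpow_lt_rpow_of_neg h1m hlt (by linarith [h.2])
      have : 0 < α / (α - 1) * ((1 + x) ^ (α - 1) - (1 - x) ^ (α - 1)) :=
        mul_pos_of_neg_of_neg hc (by linarith)
      positivity
    · -- α > 1
      have h1 : (1:ℝ) < α := h
      have hc : 0 < α / (α - 1) := div_pos hα0 (by linarith)
      have hAB : (1 - x) ^ (α - 1) < (1 + x) ^ (α - 1) :=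
        Real.rpow_lt_rpow h1m.le hlt (by linarith)
      have : 0 < α / (α - 1) * ((1 + x) ^ (α - 1) - (1 - x) ^ (α - 1)) :=
        mul_pos hc (by linarith)
      positivity
end

section
/- For α ∈ (0,1) ∪ (1,∞), the function γ_α(p) = (α/(α-1)) · (((1+p)^α + (1-p)^α)^{1/α} - 2^{1/α}) is convex on [0,1]. -/
/-!
On the positive cone, `N x = (∑ i, x i ^ α) ^ α⁻¹` is positively homogeneous of degree one, so
`N (a • x + b • y)` is `a * N x + b * N y` times the value of `N` at a convex combination of the
unit vectors `x / N x` and `y / N y`. Since `∑ i, x i ^ α` is convex for `α ≥ 1` and concave for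
`α ≤ 1`, that value is `≤ 1` resp. `≥ 1`, hence `N` is convex resp. concave. Restricted to the
segment `p ↦ (1 + p, 1 - p)` this gives convexity of the bracket in `γ_α` for `α > 1` and
concavity for `α < 1`, which the sign of `α / (α - 1)` turns into convexity of `γ_α`.
-/

open Set Real

section Homogeneous

variable {E : Type*} [AddCommGroup E] [Module ℝ E]

def ConvexCone.PosHomogeneousOn (K : ConvexCone ℝ E) (r : ℝ) (g : E → ℝ) : Prop :=
  ∀ x ∈ K, ∀ t : ℝ, 0 < t → g (t • x) = t ^ r * g x

variable {K : ConvexCone ℝ E} {r : ℝ} {g : E → ℝ} {x y : E} {a b : ℝ}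

namespace ConvexCone.PosHomogeneousOn

lemma map_inv_rpow_smul_self (hg : K.PosHomogeneousOn r g) (hr : r ≠ 0) (hx : x ∈ K)
    (hgx : 0 < g x) : g ((g x ^ r⁻¹)⁻¹ • x) = 1 := by
  have hm : 0 < g x ^ r⁻¹ := rpow_pos_of_pos hgx _
  rw [hg x hx _ (inv_pos.2 hm), inv_rpow hm.le, rpow_inv_rpow hgx.le hr, inv_mul_cancel₀ hgx.ne']

/-- Writing `x = m • x'`, `y = n • y'` with `g x' = g y' = 1`, the point `a • x + b • y` is
`(a * m + b * n)` times a convex combination of `x'` and `y'`. -/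
lemma exists_rpow_inv_map_convexCombo_eq (hg : K.PosHomogeneousOn r g) (hr : 0 < r)
    (hpos : ∀ x ∈ K, 0 < g x) (hx : x ∈ K) (hy : y ∈ K) (ha : 0 ≤ a) (hb : 0 ≤ b)
    (hab : a + b = 1) :
    ∃ x' ∈ K, ∃ y' ∈ K, g x' = 1 ∧ g y' = 1 ∧ ∃ a' b' : ℝ, 0 ≤ a' ∧ 0 ≤ b' ∧ a' + b' = 1 ∧
      a' • x' + b' • y' ∈ K ∧
      g (a • x + b • y) ^ r⁻¹ = (a * g x ^ r⁻¹ + b * g y ^ r⁻¹) * g (a' • x' + b' • y') ^ r⁻¹ := by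
  set m := g x ^ r⁻¹
  set n := g y ^ r⁻¹
  have hm : 0 < m := rpow_pos_of_pos (hpos x hx) _
  have hn : 0 < n := rpow_pos_of_pos (hpos y hy) _
  set c := a * m + b * n
  have hc : 0 < c := by
    rcases ha.eq_or_lt with rfl | ha
    · simp_all [c]
    · positivity
  have hx' : m⁻¹ • x ∈ K := K.smul_mem (inv_pos.2 hm) hx
  have hy' : n⁻¹ • y ∈ K := K.smul_mem (inv_pos.2 hn) hy
  have hz : (a * m / c) • m⁻¹ • x + (b * n / c) • n⁻¹ • y ∈ K :=
    K.convex hx' hy' (by positivity) (by positivity) (by rw [← add_div]; exact div_self hc.ne')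
  have hcombo : a • x + b • y = c • ((a * m / c) • m⁻¹ • x + (b * n / c) • n⁻¹ • y) := by
    simp only [smul_add, smul_smul]
    congr 2 <;> field_simp
  refine ⟨_, hx', _, hy', hg.map_inv_rpow_smul_self hr.ne' hx (hpos x hx),
    hg.map_inv_rpow_smul_self hr.ne' hy (hpos y hy), _, _, by positivity, by positivity,
    by rw [← add_div]; exact div_self hc.ne', hz, ?_⟩
  rw [hcombo, hg _ hz _ hc, mul_rpow (by positivity) (hpos _ hz).le,
    rpow_rpow_inv hc.le hr.ne']

theorem convexOn_rpow_inv (hg : K.PosHomogeneousOn r g) (hr : 0 < r) (hpos : ∀ x ∈ K, 0 < g x)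
    (hconv : ConvexOn ℝ K g) : ConvexOn ℝ K fun x => g x ^ r⁻¹ := by
  refine ⟨K.convex, fun x hx y hy a b ha hb hab => ?_⟩
  obtain ⟨x', hx', y', hy', hgx', hgy', a', b', ha', hb', hab', hz, h⟩ :=
    hg.exists_rpow_inv_map_convexCombo_eq hr hpos hx hy ha hb hab
  have hle : g (a' • x' + b' • y') ≤ 1 := by
    simpa [hgx', hgy', hab'] using hconv.2 hx' hy' ha' hb' hab'
  have hgx := hpos x hx
  have hgy := hpos y hy
  simp only [smul_eq_mul, h]
  exact mul_le_of_le_one_right (by positivity) (rpow_le_one (hpos _ hz).le hle (by positivity))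

theorem concaveOn_rpow_inv (hg : K.PosHomogeneousOn r g) (hr : 0 < r) (hpos : ∀ x ∈ K, 0 < g x)
    (hconc : ConcaveOn ℝ K g) : ConcaveOn ℝ K fun x => g x ^ r⁻¹ := by
  refine ⟨K.convex, fun x hx y hy a b ha hb hab => ?_⟩
  obtain ⟨x', hx', y', hy', hgx', hgy', a', b', ha', hb', hab', hz, h⟩ :=
    hg.exists_rpow_inv_map_convexCombo_eq hr hpos hx hy ha hb hab
  have hge : 1 ≤ g (a' • x' + b' • y') := by
    simpa [hgx', hgy', hab'] using hconc.2 hx' hy' ha' hb' hab'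
  have hgx := hpos x hx
  have hgy := hpos y hy
  simp only [smul_eq_mul, h]
  exact le_mul_of_one_le_right (by positivity) (one_le_rpow hge (by positivity))

end ConvexCone.PosHomogeneousOn
end Homogeneous

section PowerSum

variable {ι : Type*} [Fintype ι] {r : ℝ}

lemma posHomogeneousOn_sum_rpow :
    (ConvexCone.strictlyPositive ℝ (ι → ℝ)).PosHomogeneousOn r fun x => ∑ i, x i ^ r := by
  intro x hx t ht
  rw [Finset.mul_sum]
  exact Finset.sum_congr rfl fun i _ => mul_rpow ht.le ((show 0 < x from hx).le i)

lemma sum_rpow_pos {x : ι → ℝ} (hx : 0 < x) : 0 < ∑ i, x i ^ r := by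
  obtain ⟨hx0, i, hi⟩ := Pi.lt_def.1 hx
  exact (rpow_pos_of_pos hi r).trans_le
    (Finset.single_le_sum (fun j _ => rpow_nonneg (hx0 j) r) (Finset.mem_univ i))

lemma convexOn_sum_rpow (hr : 1 ≤ r) : ConvexOn ℝ (Ici 0) fun x : ι → ℝ => ∑ i, x i ^ r := by
  refine ⟨convex_Ici 0, fun x hx y hy a b ha hb hab => ?_⟩
  simp only [smul_eq_mul, Finset.mul_sum, ← Finset.sum_add_distrib]
  exact Finset.sum_le_sum fun i _ => (convexOn_rpow hr).2 (hx i) (hy i) ha hb hab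

lemma concaveOn_sum_rpow (hr₀ : 0 ≤ r) (hr₁ : r ≤ 1) :
    ConcaveOn ℝ (Ici 0) fun x : ι → ℝ => ∑ i, x i ^ r := by
  refine ⟨convex_Ici 0, fun x hx y hy a b ha hb hab => ?_⟩
  simp only [smul_eq_mul, Finset.mul_sum, ← Finset.sum_add_distrib]
  exact Finset.sum_le_sum fun i _ => (concaveOn_rpow hr₀ hr₁).2 (hx i) (hy i) ha hb hab

theorem convexOn_sum_rpow_rpow_inv (hr : 1 ≤ r) :
    ConvexOn ℝ (Ioi 0) fun x : ι → ℝ => (∑ i, x i ^ r) ^ r⁻¹ :=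
  posHomogeneousOn_sum_rpow.convexOn_rpow_inv (by linarith) (fun _ => sum_rpow_pos)
    ((convexOn_sum_rpow hr).subset Ioi_subset_Ici_self (convex_Ioi 0))

theorem concaveOn_sum_rpow_rpow_inv (hr₀ : 0 < r) (hr₁ : r ≤ 1) :
    ConcaveOn ℝ (Ioi 0) fun x : ι → ℝ => (∑ i, x i ^ r) ^ r⁻¹ :=
  posHomogeneousOn_sum_rpow.concaveOn_rpow_inv hr₀ (fun _ => sum_rpow_pos)
    ((concaveOn_sum_rpow hr₀.le hr₁).subset Ioi_subset_Ici_self (convex_Ioi 0))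

end PowerSum

section Segment

variable {r : ℝ}

lemma lineMap_one_one_two_zero_apply (p : ℝ) :
    AffineMap.lineMap (k := ℝ) ![(1 : ℝ), 1] ![2, 0] p = ![1 + p, 1 - p] := by
  ext i
  fin_cases i <;> simp [AffineMap.lineMap_apply_module'] <;> ring

lemma lineMap_one_one_two_zero_mem_Ioi {p : ℝ} (hp : p ∈ Icc (-1 : ℝ) 1) :
    AffineMap.lineMap ![1, 1] ![2, 0] p ∈ Ioi (0 : Fin 2 → ℝ) := by
  obtain ⟨h₁, h₂⟩ := hp
  rw [lineMap_one_one_two_zero_apply, mem_Ioi, Pi.lt_def]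
  refine ⟨Fin.forall_fin_two.2 ⟨show (0 : ℝ) ≤ 1 + p by linarith, show (0 : ℝ) ≤ 1 - p by linarith⟩,
    ?_⟩
  by_cases hp₁ : p < 1
  · exact ⟨1, show (0 : ℝ) < 1 - p by linarith⟩
  · exact ⟨0, show (0 : ℝ) < 1 + p by linarith⟩

theorem convexOn_rpow_add_rpow_rpow_inv (hr : 1 ≤ r) :
    ConvexOn ℝ (Icc (-1) 1) fun p : ℝ => ((1 + p) ^ r + (1 - p) ^ r) ^ r⁻¹ := by
  have h := ((convexOn_sum_rpow_rpow_inv hr).comp_affineMap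
    (AffineMap.lineMap ![(1 : ℝ), 1] ![2, 0])).subset
    (fun _ => lineMap_one_one_two_zero_mem_Ioi) (convex_Icc _ _)
  simpa [Function.comp_def, lineMap_one_one_two_zero_apply, Fin.sum_univ_two] using h

theorem concaveOn_rpow_add_rpow_rpow_inv (hr₀ : 0 < r) (hr₁ : r ≤ 1) :
    ConcaveOn ℝ (Icc (-1) 1) fun p : ℝ => ((1 + p) ^ r + (1 - p) ^ r) ^ r⁻¹ := by
  have h := ((concaveOn_sum_rpow_rpow_inv hr₀ hr₁).comp_affineMap
    (AffineMap.lineMap ![(1 : ℝ), 1] ![2, 0])).subset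
    (fun _ => lineMap_one_one_two_zero_mem_Ioi) (convex_Icc _ _)
  simpa [Function.comp_def, lineMap_one_one_two_zero_apply, Fin.sum_univ_two] using h

end Segment

theorem gamma_convexOn (α : ℝ) (hα : α ∈ Set.Ioo (0:ℝ) 1 ∪ Set.Ioi (1:ℝ)) :
    ConvexOn ℝ (Set.Icc (0:ℝ) 1)
      (fun p : ℝ => (α / (α - 1)) * (((1 + p) ^ α + (1 - p) ^ α) ^ (1/α) - (2:ℝ) ^ (1/α))) := by
  have hI : Icc (0 : ℝ) 1 ⊆ Icc (-1) 1 := Icc_subset_Icc_left (by norm_num)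
  rcases hα with ⟨hα₀, hα₁⟩ | hα₁
  · have hc : 0 ≤ α / (1 - α) := div_nonneg hα₀.le (by linarith)
    have h := (((concaveOn_rpow_add_rpow_rpow_inv hα₀ hα₁.le).add_const (-2 ^ α⁻¹)).smul hc).neg
    refine (h.subset hI (convex_Icc 0 1)).congr fun p _ => ?_
    simp only [Pi.neg_apply, Pi.add_apply, smul_eq_mul, one_div]
    rw [← neg_sub 1 α, div_neg]
    ring
  · have hα₁ : 1 < α := hα₁
    have hc : 0 ≤ α / (α - 1) := div_nonneg (by linarith) (by linarith)
    have h := ((convexOn_rpow_add_rpow_rpow_inv hα₁.le).add_const (-2 ^ α⁻¹)).smul hc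
    refine (h.subset hI (convex_Icc 0 1)).congr fun p _ => ?_
    simp only [Pi.add_apply, smul_eq_mul, one_div]
    ring
end

section
/- Let h > 0 and α ∈ (0,1]. Define φ_α(p) = (α/(α-1))(1 − p^{(α-1)/α}) for α ≠ 1 (and φ_1(p) = −log p). Then t ↦ φ_α(σ(t)) is C_h(α)-Lipschitz on [−h, h], where C_h(α) = σ(h)·σ(−h)^{(α-1)/α} and σ is the sigmoid. -/
/-!
With `β = (α - 1) / α ≤ 0`, one has `φ_α'(p) = -p ^ (β - 1)` for every `α ≠ 0` (for `α = 1` this is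
`-1 / p`), and `σ' = σ · σ(-·)`, so `(φ_α ∘ σ)'(t) = -σ(t) ^ β · σ(-t)`. Both factors are
antitone in `t`, so on `[-h, h]` the derivative is bounded in absolute value by its value at `-h`,
which is `σ(-h) ^ β · σ(h)`; the mean value inequality concludes.
-/

noncomputable def sigmoid (t : ℝ) : ℝ := 1 / (1 + Real.exp (-t))

noncomputable def phiAlpha (α : ℝ) (p : ℝ) : ℝ :=
  if α = 1 then -Real.log p else (α / (α - 1)) * (1 - p ^ ((α - 1)/α))

theorem sigmoid_eq_real_sigmoid : sigmoid = Real.sigmoid := by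
  funext t
  rw [sigmoid, Real.sigmoid_def, one_div]

theorem hasDerivAt_phiAlpha {α p : ℝ} (hα : α ≠ 0) (hp : 0 < p) :
    HasDerivAt (phiAlpha α) (-p ^ ((α - 1) / α - 1)) p := by
  by_cases hα₁ : α = 1
  · subst hα₁
    have hφ : phiAlpha 1 = fun p => -Real.log p := by
      funext p; simp [phiAlpha]
    rw [hφ]
    norm_num [Real.rpow_neg_one]
    exact (Real.hasDerivAt_log hp.ne').neg
  · have hφ : phiAlpha α = fun p => α / (α - 1) * (1 - p ^ ((α - 1) / α)) := by
      funext p; simp [phiAlpha, hα₁]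
    have hcoef : α / (α - 1) * ((α - 1) / α) = 1 := by
      field_simp [sub_ne_zero.mpr hα₁]
    rw [hφ]
    refine (((Real.hasDerivAt_rpow_const (Or.inl hp.ne')).const_sub 1).const_mul
      (α / (α - 1))).congr_deriv ?_
    rw [mul_neg, ← mul_assoc, hcoef, one_mul]

theorem hasDerivAt_phiAlpha_comp_sigmoid {α : ℝ} (hα : α ≠ 0) (t : ℝ) :
    HasDerivAt (fun s => phiAlpha α (Real.sigmoid s))
      (-(Real.sigmoid t ^ ((α - 1) / α) * Real.sigmoid (-t))) t := by
  refine ((hasDerivAt_phiAlpha hα (Real.sigmoid_pos t)).comp t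
    (Real.hasDerivAt_sigmoid t)).congr_deriv ?_
  rw [Real.rpow_sub_one (Real.sigmoid_pos t).ne', Real.sigmoid_neg]
  field_simp [(Real.sigmoid_pos t).ne']

theorem antitone_sigmoid_rpow_mul_sigmoid_neg {β : ℝ} (hβ : β ≤ 0) :
    Antitone fun x => Real.sigmoid x ^ β * Real.sigmoid (-x) := fun _ _ hxy =>
  mul_le_mul (Real.rpow_le_rpow_of_nonpos (Real.sigmoid_pos _) (Real.sigmoid_le hxy) hβ)
    (Real.sigmoid_le (neg_le_neg hxy)) (Real.sigmoid_nonneg _)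
    (Real.rpow_nonneg (Real.sigmoid_nonneg _) _)

theorem alpha_loss_sigmoid_lipschitz_general (h α : ℝ)
    (hα : α ∈ Set.Ioc (0:ℝ) 1) :
    ∀ s ∈ Set.Icc (-h) h, ∀ t ∈ Set.Icc (-h) h,
      |phiAlpha α (sigmoid s) - phiAlpha α (sigmoid t)| ≤
        (sigmoid h * sigmoid (-h) ^ ((α - 1)/α)) * |s - t| := by
  intro s hs t ht
  rw [sigmoid_eq_real_sigmoid]
  have hexp : (α - 1) / α ≤ 0 := div_nonpos_of_nonpos_of_nonneg (by linarith [hα.2]) hα.1.le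
  have hderiv_le : ∀ x ∈ Set.Icc (-h) h,
      ‖-(Real.sigmoid x ^ ((α - 1) / α) * Real.sigmoid (-x))‖ ≤
        Real.sigmoid h * Real.sigmoid (-h) ^ ((α - 1) / α) := by
    intro x hx
    rw [norm_neg, Real.norm_of_nonneg
      (mul_nonneg (Real.rpow_nonneg (Real.sigmoid_nonneg x) _) (Real.sigmoid_nonneg _)),
      mul_comm _ (_ ^ _)]
    simpa using antitone_sigmoid_rpow_mul_sigmoid_neg hexp hx.1
  simpa [Real.norm_eq_abs] using Convex.norm_image_sub_le_of_norm_hasDerivWithin_le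
    (fun x _ => (hasDerivAt_phiAlpha_comp_sigmoid hα.1.ne' x).hasDerivWithinAt) hderiv_le
    (convex_Icc _ _) ht hs

theorem alpha_loss_sigmoid_lipschitz (h α : ℝ) (hh : 0 < h)
    (hα : α ∈ Set.Ioc (0:ℝ) 1) :
    ∀ s ∈ Set.Icc (-h) h, ∀ t ∈ Set.Icc (-h) h,
      |phiAlpha α (sigmoid s) - phiAlpha α (sigmoid t)| ≤
        (sigmoid h * sigmoid (-h) ^ ((α - 1)/α)) * |s - t| :=
  alpha_loss_sigmoid_lipschitz_general h α hα
end
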